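/- If (A, <_A) is ℵ₁-saturated and a < b are two elements of M = ω × A (lexicographic order) lying in the same fiber {n} × A, then the open interval (a, b) of M has uncountable cofinality, while M itself has cofinality ℵ₀; hence no order isomorphism maps M onto (a, b). -/

import Mathlib

/-!
An interval `(a, b)` inside one fiber `{n} × A` is order isomorphic to the interval of `A`
between the second coordinates of `a` and `b`. By saturation every countable subset of such an
interval is bounded strictly below its right end point, so it is not cofinal, whereas the points
`(k, y)`, `k : ℕ`, are cofinal in `ℕ ×ₗ A`. Having a countable cofinal set is invariant under
order isomorphisms.
-/

open Set

def HasCountableCofinalSet (α : Type*) [LE α] : Prop :=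
  ∃ C : Set α, C.Countable ∧ IsCofinal C

theorem HasCountableCofinalSet.of_orderIso {α β : Type*} [Preorder α] [Preorder β]
    (h : HasCountableCofinalSet α) (e : α ≃o β) : HasCountableCofinalSet β :=
  let ⟨C, hC, hcof⟩ := h
  ⟨e '' C, hC.image e, e.map_isCofinal hcof⟩

/-- Hausdorff's `η₁` condition; for dense linear orders without end points it is
`ℵ₁`-saturation. -/
def CountablySaturated (A : Type*) [LT A] : Prop :=
  ∀ S T : Set A, S.Countable → T.Countable → (∀ s ∈ S, ∀ t ∈ T, s < t) →
    ∃ a : A, (∀ s ∈ S, s < a) ∧ (∀ t ∈ T, a < t)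

theorem CountablySaturated.not_hasCountableCofinalSet_Ioo {A : Type*} [Preorder A]
    (hA : CountablySaturated A) {u v : A} (huv : u < v) :
    ¬ HasCountableCofinalSet (Ioo u v) := by
  rintro ⟨C, hC, hcof⟩
  obtain ⟨m, hm_above, hm_below⟩ := hA (insert u (Subtype.val '' C)) {v}
    ((hC.image _).insert u) (countable_singleton v) (by
      rintro s (rfl | ⟨c, -, rfl⟩) t rfl
      exacts [huv, c.2.2])
  obtain ⟨c, hcC, hmc⟩ := hcof ⟨m, hm_above u (mem_insert _ _), hm_below v rfl⟩
  have hcm : (c : A) < m := hm_above c (mem_insert_of_mem _ ⟨c, hcC, rfl⟩)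
  exact (lt_of_le_of_lt hmc hcm).false

namespace Prod.Lex

variable {α β : Type*}

theorem hasCountableCofinalSet [Preorder α] [Countable α] [NoMaxOrder α] [LE β] [Nonempty β] :
    HasCountableCofinalSet (α ×ₗ β) := by
  obtain ⟨y⟩ := ‹Nonempty β›
  refine ⟨range fun k : α => toLex (k, y), countable_range _, fun x => ?_⟩
  obtain ⟨k, hk⟩ := exists_gt (ofLex x).1
  exact ⟨_, ⟨k, rfl⟩, le_iff.2 (Or.inl hk)⟩

variable [Preorder α] [Preorder β]

theorem mem_Ioo_iff_of_fst_eq {a b x : α ×ₗ β} (h : (ofLex a).1 = (ofLex b).1) :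
    x ∈ Ioo a b ↔ (ofLex x).1 = (ofLex a).1 ∧ (ofLex x).2 ∈ Ioo (ofLex a).2 (ofLex b).2 := by
  simp only [mem_Ioo, lt_iff, ← h]
  grind

def orderIsoIooOfFstEq {a b : α ×ₗ β} (h : (ofLex a).1 = (ofLex b).1) :
    Ioo a b ≃o Ioo (ofLex a).2 (ofLex b).2 where
  toFun x := ⟨(ofLex x.1).2, ((mem_Ioo_iff_of_fst_eq h).1 x.2).2⟩
  invFun y := ⟨toLex ((ofLex a).1, y), (mem_Ioo_iff_of_fst_eq h).2 ⟨rfl, y.2⟩⟩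
  left_inv x := Subtype.ext <| ofLex.injective <|
    Prod.ext ((mem_Ioo_iff_of_fst_eq h).1 x.2).1.symm rfl
  right_inv _ := rfl
  map_rel_iff' {x y} := by
    have hx := ((mem_Ioo_iff_of_fst_eq h).1 x.2).1
    have hy := ((mem_Ioo_iff_of_fst_eq h).1 y.2).1
    change (ofLex x.1).2 ≤ (ofLex y.1).2 ↔ x.1 ≤ y.1
    rw [le_iff, hx, hy]
    simp

end Prod.Lex

theorem stmt_16_general (A : Type*) [LinearOrder A]
    (hsat : ∀ S T : Set A, S.Countable → T.Countable →
      (∀ s ∈ S, ∀ t ∈ T, s < t) →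
      ∃ a : A, (∀ s ∈ S, s < a) ∧ (∀ t ∈ T, a < t))
    (a b : Lex (ℕ × A)) (hfib : (ofLex a).1 = (ofLex b).1) (hab : a < b) :
    (¬ ∃ C : Set (Set.Ioo a b), C.Countable ∧ ∀ q : Set.Ioo a b, ∃ c ∈ C, q ≤ c) ∧
    (∃ S : Set (Lex (ℕ × A)), S.Countable ∧ ∀ x : Lex (ℕ × A), ∃ s ∈ S, x ≤ s) ∧
    ¬ Nonempty (Lex (ℕ × A) ≃o Set.Ioo a b) := by
  have hsnd : (ofLex a).2 < (ofLex b).2 :=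
    ((Prod.Lex.lt_iff.1 hab).resolve_left hfib.not_lt).2
  have hIoo : ¬ HasCountableCofinalSet (Ioo a b) := fun h =>
    CountablySaturated.not_hasCountableCofinalSet_Ioo hsat hsnd
      (h.of_orderIso (Prod.Lex.orderIsoIooOfFstEq hfib))
  have : Nonempty A := ⟨(ofLex a).2⟩
  have hM : HasCountableCofinalSet (ℕ ×ₗ A) := Prod.Lex.hasCountableCofinalSet
  exact ⟨hIoo, hM, fun ⟨e⟩ => hIoo (hM.of_orderIso e)⟩

/-- If `A` is `ℵ₁`-saturated and `a < b` lie in the same fiber of `M = ω × A` (lex),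
then `(a, b)` has uncountable cofinality while `M` has cofinality `ℵ₀`; hence no
order isomorphism maps `M` onto `(a, b)`. -/
theorem stmt_16 (A : Type*) [LinearOrder A] [DenselyOrdered A] [NoMinOrder A] [NoMaxOrder A]
    (hsat : ∀ S T : Set A, S.Countable → T.Countable →
      (∀ s ∈ S, ∀ t ∈ T, s < t) →
      ∃ a : A, (∀ s ∈ S, s < a) ∧ (∀ t ∈ T, a < t))
    (a b : Lex (ℕ × A)) (hfib : (ofLex a).1 = (ofLex b).1) (hab : a < b) :
    (¬ ∃ C : Set (Set.Ioo a b), C.Countable ∧ ∀ q : Set.Ioo a b, ∃ c ∈ C, q ≤ c) ∧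
    (∃ S : Set (Lex (ℕ × A)), S.Countable ∧ ∀ x : Lex (ℕ × A), ∃ s ∈ S, x ≤ s) ∧
    ¬ Nonempty (Lex (ℕ × A) ≃o Set.Ioo a b) :=
  stmt_16_general A hsat a b hfib hab
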